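/- Let G be a connected graph on at least 2 vertices and L a degree-assignment for G. If G is L-colorable, then for every vertex x of G with a neighbor z and a color a ∈ L(x) \ L(z) such that G − x is connected, there exists an L-coloring φ of G with φ(x) = a. -/
import Mathlib

open scoped Classical

noncomputable def greedy {V : Type*} [Fintype V] [DecidableEq V] (G : SimpleGraph V)
    [DecidableRel G.Adj] (m : V → ℕ) (L : V → Finset ℕ) (x : V) (a : ℕ) (v : V) : ℕ :=
  if v = x then a
  else
    let forb : Finset ℕ :=
      ((G.neighborFinset v).filter (fun u => m u < m v)).attach.image
        (fun u => greedy G m L x a u.1)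
    if h : (L v \ forb).Nonempty then (L v \ forb).min' h else 0
termination_by m v
decreasing_by exact (Finset.mem_filter.mp u.2).2

lemma greedy_x {V : Type*} [Fintype V] [DecidableEq V] (G : SimpleGraph V)
    [DecidableRel G.Adj] (m : V → ℕ) (L : V → Finset ℕ) (x : V) (a : ℕ) :
    greedy G m L x a x = a := by
  rw [greedy]; simp

lemma greedy_ne {V : Type*} [Fintype V] [DecidableEq V] (G : SimpleGraph V)
    [DecidableRel G.Adj] (m : V → ℕ) (L : V → Finset ℕ) (x : V) (a : ℕ) (v : V)
    (hv : v ≠ x) :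
    greedy G m L x a v =
      (if h : ((L v \ ((G.neighborFinset v).filter (fun u => m u < m v)).image
          (greedy G m L x a))).Nonempty then
        (L v \ ((G.neighborFinset v).filter (fun u => m u < m v)).image
          (greedy G m L x a)).min' h else 0) := by
  have himg : (((G.neighborFinset v).filter (fun u => m u < m v)).attach.image
      (fun u => greedy G m L x a u.1)) = ((G.neighborFinset v).filter (fun u => m u < m v)).image
      (greedy G m L x a) := by
    ext c; simp [Finset.mem_image]
  rw [greedy]
  simp only [hv, if_false, himg]

/-- If G is connected on at least 2 vertices, L is a degree-assignment, G is
L-colorable, and x has a neighbor z with a color a ∈ L(x) \ L(z) such that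
G − x is connected, then G has an L-coloring assigning a to x. -/
theorem stmt_11 {V : Type*} [Fintype V] [DecidableEq V] (G : SimpleGraph V)
    [DecidableRel G.Adj] (hcard : 2 ≤ Fintype.card V) (hconn : G.Connected)
    (L : V → Finset ℕ) (hdeg : ∀ v, G.degree v ≤ (L v).card)
    (hcol : ∃ φ : V → ℕ, (∀ v, φ v ∈ L v) ∧ ∀ u v, G.Adj u v → φ u ≠ φ v)
    (x z : V) (hxz : G.Adj x z) (a : ℕ) (ha : a ∈ L x \ L z)
    (hconn' : (G.induce ({x}ᶜ : Set V)).Connected) :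
    ∃ φ : V → ℕ, (∀ v, φ v ∈ L v) ∧ (∀ u v, G.Adj u v → φ u ≠ φ v) ∧
      φ x = a := by
  classical
  set N := Fintype.card V with hN
  have hNpos : 0 < N := by omega
  have hzx : z ≠ x := hxz.ne'
  have hmemS : ∀ v : V, v ≠ x → v ∈ ({x}ᶜ : Set V) := by
    intro v hv; simp [hv]
  set G' := G.induce ({x}ᶜ : Set V) with hG'
  -- distance function
  set d : V → ℕ := fun v =>
    if h : v = x then N else G'.dist ⟨z, hmemS z hzx⟩ ⟨v, hmemS v h⟩ with hd
  have hdx : d x = N := by simp [hd]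
  have hdval : ∀ v (hv : v ≠ x), d v = G'.dist ⟨z, hmemS z hzx⟩ ⟨v, hmemS v hv⟩ := by
    intro v hv; simp [hd, hv]
  have hdlt : ∀ v, v ≠ x → d v < N := by
    intro v hv
    rw [hdval v hv]
    obtain ⟨p, hp, hlen⟩ := hconn'.exists_path_of_dist ⟨z, hmemS z hzx⟩ ⟨v, hmemS v hv⟩
    calc G'.dist _ _ = p.length := hlen.symm
      _ < Fintype.card ({x}ᶜ : Set V) := hp.length_lt
      _ ≤ N := Fintype.card_le_of_injective _ Subtype.val_injective
  -- ordering measure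
  set ι : V → ℕ := fun v => ((Fintype.equivFin V) v : ℕ) with hι
  have hιlt : ∀ v, ι v < N := fun v => ((Fintype.equivFin V) v).isLt
  set m : V → ℕ := fun v => (N - d v) * N + ι v with hm
  have hminj : ∀ u v, m u = m v → u = v := by
    intro u v huv
    have h1 : m u % N = ι u := by
      simp only [hm]; rw [Nat.add_comm, Nat.add_mul_mod_self_right]; exact Nat.mod_eq_of_lt (hιlt u)
    have h2 : m v % N = ι v := by
      simp only [hm]; rw [Nat.add_comm, Nat.add_mul_mod_self_right]; exact Nat.mod_eq_of_lt (hιlt v)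
    have : ι u = ι v := by rw [← h1, ← h2, huv]
    exact (Fintype.equivFin V).injective (Fin.ext this)
  have hmx : ∀ v, v ≠ x → m x < m v := by
    intro v hv
    have h1 : m x = ι x := by simp [hm, hdx]
    have h2 : 1 ≤ N - d v := by have := hdlt v hv; omega
    calc m x = ι x := h1
      _ < N := hιlt x
      _ = 1 * N := (one_mul N).symm
      _ ≤ (N - d v) * N := Nat.mul_le_mul_right N h2
      _ ≤ m v := Nat.le_add_right _ _
  have hmlt : ∀ v w, v ≠ x → w ≠ x → d w < d v → m v < m w := by
    intro v w hv hw hdw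
    have h1 : N - d v + 1 ≤ N - d w := by
      have := hdlt v hv; have := hdlt w hw; omega
    calc m v < (N - d v) * N + N := Nat.add_lt_add_left (hιlt v) _
      _ = (N - d v + 1) * N := by ring
      _ ≤ (N - d w) * N := Nat.mul_le_mul_right N h1
      _ ≤ m w := Nat.le_add_right _ _
  -- predecessor towards z
  have hpred : ∀ v, v ≠ x → v ≠ z → ∃ w, w ≠ x ∧ G.Adj v w ∧ d w < d v := by
    intro v hv hvz
    set z' : ({x}ᶜ : Set V) := ⟨z, hmemS z hzx⟩ with hz'
    set v' : ({x}ᶜ : Set V) := ⟨v, hmemS v hv⟩ with hv'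
    have hne : z' ≠ v' := by
      simp only [hz', hv', Ne, Subtype.mk.injEq]
      exact fun h => hvz h.symm
    have hdpos : 0 < G'.dist z' v' := hconn'.pos_dist_of_ne hne
    obtain ⟨p, hp, hlen⟩ := hconn'.exists_path_of_dist z' v'
    have hplen : 0 < p.length := by omega
    obtain ⟨w', hadj, q, hq⟩ := SimpleGraph.Walk.exists_eq_cons_of_ne
      (fun h => hne h.symm) p.reverse
    have hwx : (w' : V) ≠ x := fun h => by simpa [h] using w'.2
    refine ⟨w'.1, hwx, hadj, ?_⟩
    have hqlen : q.length = p.length - 1 := by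
      have := congrArg SimpleGraph.Walk.length hq
      simp [SimpleGraph.Walk.length_reverse] at this
      omega
    have hdw : G'.dist z' w' ≤ q.length := by
      calc G'.dist z' w' = G'.dist w' z' := SimpleGraph.dist_comm ..
        _ ≤ q.length := SimpleGraph.dist_le q
    rw [hdval v hv, hdval w'.1 hwx]
    have hww : (⟨w'.1, hmemS w'.1 hwx⟩ : ({x}ᶜ : Set V)) = w' := Subtype.ext rfl
    rw [hww, show (⟨v, hmemS v hv⟩ : ({x}ᶜ : Set V)) = v' from rfl]
    omega
  set φ : V → ℕ := greedy G m L x a with hφ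
  have hφx : φ x = a := greedy_x G m L x a
  -- nonemptiness of lists minus forbidden colors
  have hnon : ∀ v, v ≠ x →
      (L v \ ((G.neighborFinset v).filter (fun u => m u < m v)).image φ).Nonempty := by
    intro v hv
    set F := (G.neighborFinset v).filter (fun u => m u < m v) with hF
    set B := F.image φ with hB
    have hFsub : F ⊆ G.neighborFinset v := Finset.filter_subset _ _
    have hcard : (L v ∩ B).card < (L v).card := by
      by_cases hvz : v = z
      · have hax : G.Adj v x := by rw [hvz]; exact hxz.symm
        have haL : a ∉ L v := by rw [hvz]; exact (Finset.mem_sdiff.mp ha).2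
        have hxF : x ∈ F := by
          rw [hF, Finset.mem_filter]
          exact ⟨(SimpleGraph.mem_neighborFinset ..).2 hax, hmx v hv⟩
        have hsub : L v ∩ B ⊆ (F.erase x).image φ := by
          intro c hc
          obtain ⟨hc1, hc2⟩ := Finset.mem_inter.mp hc
          obtain ⟨u, hu, hcu⟩ := Finset.mem_image.mp hc2
          refine Finset.mem_image.mpr ⟨u, Finset.mem_erase.mpr ⟨?_, hu⟩, hcu⟩
          rintro rfl
          rw [hφx] at hcu
          exact haL (hcu ▸ hc1)
        have h1 : (L v ∩ B).card ≤ (F.erase x).card :=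
          le_trans (Finset.card_le_card hsub) (Finset.card_image_le)
        have h2 : (F.erase x).card = F.card - 1 := Finset.card_erase_of_mem hxF
        have h3 : F.card ≤ G.degree v := by
          rw [← SimpleGraph.card_neighborFinset_eq_degree]
          exact Finset.card_le_card hFsub
        have h4 : 1 ≤ F.card := Finset.card_pos.mpr ⟨x, hxF⟩
        have h5 := hdeg v
        omega
      · obtain ⟨w, hwx, hadj, hdw⟩ := hpred v hv hvz
        have hwF : w ∉ F := by
          rw [hF, Finset.mem_filter]
          push_neg
          intro _
          exact le_of_lt (hmlt v w hv hwx hdw)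
        have hsub : F ⊆ (G.neighborFinset v).erase w :=
          Finset.subset_erase.mpr ⟨hFsub, hwF⟩
        have h1 : (L v ∩ B).card ≤ B.card := Finset.card_le_card Finset.inter_subset_right
        have h2 : B.card ≤ F.card := Finset.card_image_le
        have h3 : F.card ≤ ((G.neighborFinset v).erase w).card := Finset.card_le_card hsub
        have h4 : ((G.neighborFinset v).erase w).card = G.degree v - 1 := by
          rw [Finset.card_erase_of_mem ((SimpleGraph.mem_neighborFinset ..).2 hadj),
            SimpleGraph.card_neighborFinset_eq_degree]
        have h5 : 1 ≤ G.degree v := by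
          rw [← SimpleGraph.card_neighborFinset_eq_degree]
          exact Finset.card_pos.mpr ⟨w, (SimpleGraph.mem_neighborFinset ..).2 hadj⟩
        have h6 := hdeg v
        omega
    have hc := Finset.card_sdiff_add_card_inter (L v) B
    rw [← Finset.card_pos]
    omega
  have hmem : ∀ v (hv : v ≠ x),
      φ v ∈ L v \ ((G.neighborFinset v).filter (fun u => m u < m v)).image φ := by
    intro v hv
    rw [hφ, greedy_ne G m L x a v hv, dif_pos (hnon v hv)]
    exact Finset.min'_mem _ _
  have key : ∀ u v, G.Adj u v → m u < m v → φ u ≠ φ v := by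
    intro u v huv hlt
    have hvx : v ≠ x := by
      rintro rfl
      exact absurd hlt (Nat.not_lt.mpr (le_of_lt (hmx u huv.ne)))
    have h1 := hmem v hvx
    have h2 : φ u ∈ ((G.neighborFinset v).filter (fun w => m w < m v)).image φ :=
      Finset.mem_image.mpr ⟨u, Finset.mem_filter.mpr
        ⟨(SimpleGraph.mem_neighborFinset ..).2 huv.symm, hlt⟩, rfl⟩
    intro h
    exact (Finset.mem_sdiff.mp h1).2 (h ▸ h2)
  refine ⟨φ, ?_, ?_, hφx⟩
  · intro v
    by_cases hv : v = x
    · subst hv; rw [hφx]; exact (Finset.mem_sdiff.mp ha).1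
    · exact (Finset.mem_sdiff.mp (hmem v hv)).1
  · intro u v huv
    rcases lt_trichotomy (m u) (m v) with h | h | h
    · exact key u v huv h
    · exact absurd (hminj u v h) huv.ne
    · exact (key v u huv.symm h).symm
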